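/- arXiv:1101.2374 — 2 statements merged into one kernel-verified Lean document; each statement's English description precedes it below -/
import Mathlib

section
/- Let U be a p×d real matrix and V a p×(p−d) real matrix (d ≤ p) such that W = [U, V] satisfies WᵗW = WWᵗ = I_p, let Σ be a symmetric positive definite d×d real matrix, β > 0, let Δ be the p×p block-diagonal matrix with blocks Σ and β·I_{p−d}, set S = W Δ Wᵗ, and let π > 0. Define the Gaussian density φ(y; m, S) = (2π_c)^{−p/2} det(S)^{−1/2} exp(−½ (y−m)ᵗ S⁻¹ (y−m)) where π_c denotes the circle constant. Then for every y, m ∈ ℝᵖ: −2·log(π · φ(y; m, S)) = (P(y−m))ᵗ (U Σ⁻¹ Uᵗ) (P(y−m)) + (1/β)·‖(y−m) − P(y−m)‖² + log(det Σ) + (p−d)·log β − 2·log π + p·log(2π_c), where P(x) = U Uᵗ x and ‖·‖ is the Euclidean norm on ℝᵖ. -/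
/-!
Because `W = [U, V]` is square up to reindexing, `W Wᵀ = 1` forces `Wᵀ W = 1`, so conjugation by
`W` preserves determinants and commutes with inversion: `det S = det Σ · β ^ (p - d)` and
`S⁻¹ = U Σ⁻¹ Uᵀ + β⁻¹ V Vᵀ`. Since `V Vᵀ = 1 - U Uᵀ` is the projection complementary to
`P = U Uᵀ`, the Mahalanobis term `xᵀ S⁻¹ x` splits into `(P x)ᵀ U Σ⁻¹ Uᵀ (P x) + β⁻¹ ‖x - P x‖²`,
and the remaining terms come from taking the logarithm of the density.
-/

open Matrix

/-- The multivariate Gaussian density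
`φ(y; m, S) = (2π)^(-p/2) det(S)^(-1/2) exp(-½ (y-m)ᵗ S⁻¹ (y-m))`. -/
noncomputable def gaussianDensity {p : ℕ} (S : Matrix (Fin p) (Fin p) ℝ)
    (m y : Fin p → ℝ) : ℝ :=
  (2 * Real.pi) ^ (-(p : ℝ) / 2) * S.det ^ (-(1 : ℝ) / 2) *
    Real.exp (-(1 / 2) * ((y - m) ⬝ᵥ S⁻¹.mulVec (y - m)))

namespace Matrix

variable {R : Type*} {m n n₁ n₂ : Type*}

theorem mulVec_dotProduct_mulVec [Fintype m] [Fintype n] [Fintype n₁] [CommSemiring R]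
    (Q : Matrix m n R) (N : Matrix m n₁ R) (x : n → R) (z : n₁ → R) :
    Q *ᵥ x ⬝ᵥ N *ᵥ z = x ⬝ᵥ (Qᵀ * N) *ᵥ z := by
  rw [dotProduct_comm, ← dotProduct_transpose_mulVec, mulVec_mulVec, dotProduct_comm]

theorem transpose_fromCols_mul_fromCols_eq_one_iff [Fintype m] [DecidableEq n₁]
    [DecidableEq n₂] [Semiring R] {U : Matrix m n₁ R} {V : Matrix m n₂ R} :
    (fromCols U V)ᵀ * fromCols U V = 1 ↔
      Uᵀ * U = 1 ∧ Uᵀ * V = 0 ∧ Vᵀ * U = 0 ∧ Vᵀ * V = 1 := by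
  rw [transpose_fromCols, fromRows_mul_fromCols, ← fromBlocks_one, fromBlocks_inj]

theorem fromCols_mul_transpose_fromCols [Fintype n₁] [Fintype n₂] [Semiring R]
    (U : Matrix m n₁ R) (V : Matrix m n₂ R) :
    fromCols U V * (fromCols U V)ᵀ = U * Uᵀ + V * Vᵀ := by
  rw [transpose_fromCols, fromCols_mul_fromRows]

theorem fromCols_mul_fromBlocks_mul_transpose [Fintype n₁] [Fintype n₂] [Semiring R]
    (U : Matrix m n₁ R) (V : Matrix m n₂ R) (A : Matrix n₁ n₁ R) (D : Matrix n₂ n₂ R) :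
    fromCols U V * fromBlocks A 0 0 D * (fromCols U V)ᵀ = U * A * Uᵀ + V * D * Vᵀ := by
  rw [fromCols_mul_fromBlocks, transpose_fromCols, fromCols_mul_fromRows]
  simp

theorem dotProduct_mulVec_eq_proj_add_compl [Fintype m] [Fintype n₁] [Fintype n₂]
    [DecidableEq m] [DecidableEq n₁] [DecidableEq n₂] [CommRing R]
    {U : Matrix m n₁ R} {V : Matrix m n₂ R} (hU : Uᵀ * U = 1) (hV : Vᵀ * V = 1)
    (hUV : U * Uᵀ + V * Vᵀ = 1) (A : Matrix n₁ n₁ R) (c : R) (x : m → R) :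
    x ⬝ᵥ (U * A * Uᵀ + c • (V * Vᵀ)) *ᵥ x =
      (U * Uᵀ) *ᵥ x ⬝ᵥ (U * A * Uᵀ) *ᵥ ((U * Uᵀ) *ᵥ x)
        + c * ((x - (U * Uᵀ) *ᵥ x) ⬝ᵥ (x - (U * Uᵀ) *ᵥ x)) := by
  have hP : (U * Uᵀ)ᵀ * (U * A * Uᵀ * (U * Uᵀ)) = U * A * Uᵀ := by
    simp only [transpose_mul, transpose_transpose, Matrix.mul_assoc]
    simp only [← Matrix.mul_assoc Uᵀ U, hU, Matrix.one_mul]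
  have hQ : (V * Vᵀ)ᵀ * (V * Vᵀ) = V * Vᵀ := by
    simp only [transpose_mul, transpose_transpose, Matrix.mul_assoc]
    simp only [← Matrix.mul_assoc Vᵀ V, hV, Matrix.one_mul]
  have hx : x - (U * Uᵀ) *ᵥ x = (V * Vᵀ) *ᵥ x := by
    rw [eq_sub_of_add_eq' hUV, sub_mulVec, one_mulVec]
  rw [hx, mulVec_mulVec, mulVec_dotProduct_mulVec, mulVec_dotProduct_mulVec, hP, hQ, add_mulVec,
    dotProduct_add, smul_mulVec, dotProduct_smul, smul_eq_mul]

section Conj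

variable [Fintype m] [Fintype n] [DecidableEq m] [DecidableEq n] [CommRing R]

theorem det_mul_comm_of_equiv (e : m ≃ n) (A : Matrix m n R) (B : Matrix n m R) :
    (A * B).det = (B * A).det :=
  calc (A * B).det = (A.submatrix id e * B.submatrix e id).det := by
        rw [submatrix_mul_equiv, submatrix_id_id]
    _ = (B.submatrix e id * A.submatrix id e).det := det_mul_comm _ _
    _ = (B * A).det := by
        rw [← submatrix_mul _ _ _ _ _ Function.bijective_id, det_submatrix_equiv_self]

theorem det_mul_mul_transpose_of_equiv (e : m ≃ n) {W : Matrix m n R} (hW : Wᵀ * W = 1)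
    (Δ : Matrix n n R) : (W * Δ * Wᵀ).det = Δ.det := by
  rw [det_mul_comm_of_equiv e, ← Matrix.mul_assoc, hW, Matrix.one_mul]

theorem inv_mul_mul_transpose {W : Matrix m n R} (hW₁ : Wᵀ * W = 1) (hW₂ : W * Wᵀ = 1)
    {Δ : Matrix n n R} (hΔ : IsUnit Δ.det) : (W * Δ * Wᵀ)⁻¹ = W * Δ⁻¹ * Wᵀ := by
  apply inv_eq_right_inv
  calc W * Δ * Wᵀ * (W * Δ⁻¹ * Wᵀ) = W * (Δ * (Wᵀ * W) * Δ⁻¹) * Wᵀ := by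
        simp only [Matrix.mul_assoc]
    _ = 1 := by rw [hW₁, Matrix.mul_one, mul_nonsing_inv _ hΔ, Matrix.mul_one, hW₂]

end Conj

section BlockConj

variable {K : Type*} [Field K] [Fintype m] [Fintype n₁] [Fintype n₂] [DecidableEq m]
  [DecidableEq n₁] [DecidableEq n₂] {U : Matrix m n₁ K} {V : Matrix m n₂ K}

theorem det_fromCols_mul_fromBlocks_smul_one_mul_transpose (e : m ≃ n₁ ⊕ n₂)
    (hW : fromCols U V * (fromCols U V)ᵀ = 1) (A : Matrix n₁ n₁ K) (c : K) :
    (fromCols U V * fromBlocks A 0 0 (c • (1 : Matrix n₂ n₂ K)) * (fromCols U V)ᵀ).det =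
      A.det * c ^ Fintype.card n₂ := by
  rw [det_mul_mul_transpose_of_equiv e ((mul_eq_one_comm_of_equiv e).mp hW)]
  simp [det_fromBlocks_zero₂₁]

theorem inv_fromCols_mul_fromBlocks_smul_one_mul_transpose (e : m ≃ n₁ ⊕ n₂)
    (hW : fromCols U V * (fromCols U V)ᵀ = 1) {A : Matrix n₁ n₁ K} (hA : IsUnit A.det)
    {c : K} (hc : c ≠ 0) :
    (fromCols U V * fromBlocks A 0 0 (c • (1 : Matrix n₂ n₂ K)) * (fromCols U V)ᵀ)⁻¹ =
      U * A⁻¹ * Uᵀ + c⁻¹ • (V * Vᵀ) := by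
  have hΔinv : (fromBlocks A 0 0 (c • (1 : Matrix n₂ n₂ K)))⁻¹ = fromBlocks A⁻¹ 0 0 (c⁻¹ • 1) :=
    inv_eq_right_inv <| by simp [fromBlocks_multiply, mul_nonsing_inv _ hA, hc]
  rw [inv_mul_mul_transpose ((mul_eq_one_comm_of_equiv e).mp hW) hW
      (by simp [det_fromBlocks_zero₂₁, hA.ne_zero, hc]),
    hΔinv, fromCols_mul_fromBlocks_mul_transpose]
  simp

end BlockConj

end Matrix

theorem gaussianDensity_pos {p : ℕ} {S : Matrix (Fin p) (Fin p) ℝ} (hS : 0 < S.det)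
    (m y : Fin p → ℝ) : 0 < gaussianDensity S m y := by
  unfold gaussianDensity
  positivity

theorem log_gaussianDensity {p : ℕ} {S : Matrix (Fin p) (Fin p) ℝ} (hS : 0 < S.det)
    (m y : Fin p → ℝ) :
    Real.log (gaussianDensity S m y) = -(p / 2) * Real.log (2 * Real.pi)
      - 1 / 2 * Real.log S.det - 1 / 2 * ((y - m) ⬝ᵥ S⁻¹ *ᵥ (y - m)) := by
  rw [gaussianDensity, Real.log_mul (by positivity) (Real.exp_pos _).ne',
    Real.log_mul (by positivity) (by positivity), Real.log_rpow (by positivity),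
    Real.log_rpow hS, Real.log_exp]
  ring

theorem stmt_5_general (p d : ℕ) (hd : d ≤ p)
    (U : Matrix (Fin p) (Fin d) ℝ) (V : Matrix (Fin p) (Fin (p - d)) ℝ)
    (hW2 : Matrix.fromCols U V * (Matrix.fromCols U V)ᵀ = 1)
    (Sig : Matrix (Fin d) (Fin d) ℝ) (hSig : Sig.PosDef)
    (β : ℝ) (hβ : 0 < β)
    (S : Matrix (Fin p) (Fin p) ℝ)
    (hS : S = Matrix.fromCols U V *
        Matrix.fromBlocks Sig 0 0 (β • (1 : Matrix (Fin (p - d)) (Fin (p - d)) ℝ)) *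
        (Matrix.fromCols U V)ᵀ)
    (πk : ℝ) (hπk : 0 < πk) (y m : Fin p → ℝ) :
    -2 * Real.log (πk * gaussianDensity S m y) =
      ((U * Uᵀ).mulVec (y - m)) ⬝ᵥ ((U * Sig⁻¹ * Uᵀ).mulVec ((U * Uᵀ).mulVec (y - m)))
        + (1 / β) * (((y - m) - (U * Uᵀ).mulVec (y - m)) ⬝ᵥ ((y - m) - (U * Uᵀ).mulVec (y - m)))
        + Real.log Sig.det + ((p : ℝ) - (d : ℝ)) * Real.log β
        - 2 * Real.log πk + (p : ℝ) * Real.log (2 * Real.pi) := by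
  let e : Fin p ≃ Fin d ⊕ Fin (p - d) :=
    (finCongr (Nat.add_sub_cancel' hd).symm).trans finSumFinEquiv.symm
  obtain ⟨hUU, -, -, hVV⟩ := transpose_fromCols_mul_fromCols_eq_one_iff.mp
    ((mul_eq_one_comm_of_equiv e).mp hW2)
  have hUV : U * Uᵀ + V * Vᵀ = 1 := by rwa [fromCols_mul_transpose_fromCols] at hW2
  have hSig_det := hSig.det_pos
  have hdet : S.det = Sig.det * β ^ (p - d) := by
    rw [hS, det_fromCols_mul_fromBlocks_smul_one_mul_transpose e hW2, Fintype.card_fin]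
  have hinv : S⁻¹ = U * Sig⁻¹ * Uᵀ + β⁻¹ • (V * Vᵀ) := by
    rw [hS, inv_fromCols_mul_fromBlocks_smul_one_mul_transpose e hW2 hSig_det.ne'.isUnit hβ.ne']
  have hS_det : 0 < S.det := by rw [hdet]; positivity
  rw [Real.log_mul hπk.ne' (gaussianDensity_pos hS_det m y).ne', log_gaussianDensity hS_det,
    hinv, dotProduct_mulVec_eq_proj_add_compl hUU hVV hUV, hdet,
    Real.log_mul hSig_det.ne' (by positivity), Real.log_pow, Nat.cast_sub hd]
  ring

/-- Proposition 1 of the paper (E step of Fisher-EM, model DLM_[Σ_kβ_k]): the cost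
function `Γ_k(y) = -2 log (π_k φ(y; m, S))` decomposes via the projection
`P(x) = U Uᵗ x` onto the latent discriminative subspace. -/
theorem stmt_5 (p d : ℕ) (hd : d ≤ p)
    (U : Matrix (Fin p) (Fin d) ℝ) (V : Matrix (Fin p) (Fin (p - d)) ℝ)
    (hW1 : (Matrix.fromCols U V)ᵀ * Matrix.fromCols U V = 1)
    (hW2 : Matrix.fromCols U V * (Matrix.fromCols U V)ᵀ = 1)
    (Sig : Matrix (Fin d) (Fin d) ℝ) (hSig : Sig.PosDef)
    (β : ℝ) (hβ : 0 < β)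
    (S : Matrix (Fin p) (Fin p) ℝ)
    (hS : S = Matrix.fromCols U V *
        Matrix.fromBlocks Sig 0 0 (β • (1 : Matrix (Fin (p - d)) (Fin (p - d)) ℝ)) *
        (Matrix.fromCols U V)ᵀ)
    (πk : ℝ) (hπk : 0 < πk) (y m : Fin p → ℝ) :
    -2 * Real.log (πk * gaussianDensity S m y) =
      ((U * Uᵀ).mulVec (y - m)) ⬝ᵥ ((U * Sig⁻¹ * Uᵀ).mulVec ((U * Uᵀ).mulVec (y - m)))
        + (1 / β) * (((y - m) - (U * Uᵀ).mulVec (y - m)) ⬝ᵥ ((y - m) - (U * Uᵀ).mulVec (y - m)))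
        + Real.log Sig.det + ((p : ℝ) - (d : ℝ)) * Real.log β
        - 2 * Real.log πk + (p : ℝ) * Real.log (2 * Real.pi) :=
  stmt_5_general p d hd U V hW2 Sig hSig β hβ S hS πk hπk y m
end

section
/- Let y_1, …, y_n ∈ ℝᵖ, let t_1, …, t_n be nonnegative reals with n_k = ∑_i t_i > 0. Let U be a p×d matrix and V a p×(p−d) matrix such that W = [U,V] satisfies WᵗW = WWᵗ = I_p, let Σ be a symmetric positive definite d×d matrix, β > 0, and set S⁻¹ = U Σ⁻¹ Uᵗ + (1/β) V Vᵗ. Then the function μ ↦ ∑_{i=1}^n t_i (y_i − Uμ)ᵗ S⁻¹ (y_i − Uμ), defined on ℝᵈ, attains its unique minimum at μ̂ = (1/n_k) ∑_{i=1}^n t_i Uᵗ y_i. -/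
open Matrix

/-!
Since `W = [U, V]` has orthonormal columns, `Uᵀ U = 1` and `Uᵀ V = 0`, so
`S⁻¹ U = U Σ⁻¹` and `Uᵀ S⁻¹ = Σ⁻¹ Uᵀ`. Writing `μ = μ̂ + δ`, the functional therefore splits as
`Q(μ) = Q(μ̂) - (cross terms linear in ∑ t_i Uᵀ (y_i - U μ̂)) + n_k δᵀ Σ⁻¹ δ`, and the choice of `μ̂`
makes `∑ t_i Uᵀ (y_i - U μ̂) = 0`. Positive definiteness of `Σ⁻¹` then gives the unique minimum.
-/

namespace Matrix

variable {R ι m k l : Type*} [CommRing R]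

section Orthonormal

variable [Fintype m] {U : Matrix m k R} {V : Matrix m l R}

theorem transpose_mul_self_eq_one_of_fromCols [DecidableEq k] [DecidableEq l]
    (h : (fromCols U V)ᵀ * fromCols U V = 1) : Uᵀ * U = 1 := by
  rw [transpose_fromCols, fromRows_mul_fromCols, ← fromBlocks_one] at h
  exact (fromBlocks_inj.mp h).1

theorem transpose_mul_eq_zero_of_fromCols [DecidableEq k] [DecidableEq l]
    (h : (fromCols U V)ᵀ * fromCols U V = 1) : Uᵀ * V = 0 := by
  rw [transpose_fromCols, fromRows_mul_fromCols, ← fromBlocks_one] at h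
  exact (fromBlocks_inj.mp h).2.1

variable [Fintype k] [Fintype l] [DecidableEq k] (A : Matrix k k R) (c : R)

theorem mul_add_smul_mul_transpose_mul (hUU : Uᵀ * U = 1) (hUV : Uᵀ * V = 0) :
    (U * A * Uᵀ + c • (V * Vᵀ)) * U = U * A := by
  have hVU : Vᵀ * U = 0 := by rw [← transpose_transpose U, ← transpose_mul, hUV, transpose_zero]
  simp [Matrix.add_mul, Matrix.mul_assoc, hUU, hVU]

theorem transpose_mul_mul_add_smul_mul_transpose (hUU : Uᵀ * U = 1) (hUV : Uᵀ * V = 0) :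
    Uᵀ * (U * A * Uᵀ + c • (V * Vᵀ)) = A * Uᵀ := by
  simp [Matrix.mul_add, ← Matrix.mul_assoc, hUU, hUV]

end Orthonormal

section Expansion

variable [Fintype m] [Fintype k] [DecidableEq k]
  {S : Matrix m m R} {U : Matrix m k R} {A : Matrix k k R}

theorem dotProduct_mulVec_sub_mulVec (hSU : S * U = U * A) (hUS : Uᵀ * S = A * Uᵀ)
    (hUU : Uᵀ * U = 1) (r : m → R) (δ : k → R) :
    (r - U *ᵥ δ) ⬝ᵥ S *ᵥ (r - U *ᵥ δ) =
      r ⬝ᵥ S *ᵥ r - (δ ⬝ᵥ A *ᵥ (Uᵀ *ᵥ r) + (Uᵀ *ᵥ r) ⬝ᵥ A *ᵥ δ) + δ ⬝ᵥ A *ᵥ δ := by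
  have hU (w : m → R) : (U *ᵥ δ) ⬝ᵥ w = δ ⬝ᵥ Uᵀ *ᵥ w := by
    rw [dotProduct_mulVec, vecMul_transpose]
  have hleft : (U *ᵥ δ) ⬝ᵥ S *ᵥ r = δ ⬝ᵥ A *ᵥ (Uᵀ *ᵥ r) := by
    rw [hU, mulVec_mulVec, hUS, ← mulVec_mulVec]
  have hright : r ⬝ᵥ S *ᵥ (U *ᵥ δ) = (Uᵀ *ᵥ r) ⬝ᵥ A *ᵥ δ := by
    rw [mulVec_mulVec, hSU, ← mulVec_mulVec, dotProduct_mulVec, mulVec_transpose]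
  have hquad : (U *ᵥ δ) ⬝ᵥ S *ᵥ (U *ᵥ δ) = δ ⬝ᵥ A *ᵥ δ := by
    rw [hU, mulVec_mulVec, hUS, mulVec_mulVec, Matrix.mul_assoc, hUU, Matrix.mul_one]
  rw [mulVec_sub, sub_dotProduct, dotProduct_sub, dotProduct_sub, hleft, hright, hquad]
  ring

theorem sum_mul_dotProduct_mulVec_sub_mulVec [Fintype ι] (hSU : S * U = U * A)
    (hUS : Uᵀ * S = A * Uᵀ) (hUU : Uᵀ * U = 1) (t : ι → R) (y : ι → m → R) {μ₀ : k → R}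
    (hμ₀ : ∑ i, t i • Uᵀ *ᵥ y i = (∑ i, t i) • μ₀) (μ : k → R) :
    ∑ i, t i * ((y i - U *ᵥ μ) ⬝ᵥ S *ᵥ (y i - U *ᵥ μ)) =
      ∑ i, t i * ((y i - U *ᵥ μ₀) ⬝ᵥ S *ᵥ (y i - U *ᵥ μ₀)) +
        (∑ i, t i) * ((μ - μ₀) ⬝ᵥ A *ᵥ (μ - μ₀)) := by
  set δ := μ - μ₀
  set r := fun i => y i - U *ᵥ μ₀
  have hy (i : ι) : y i - U *ᵥ μ = r i - U *ᵥ δ := by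
    simp only [r, δ, mulVec_sub]; abel
  have hr : ∑ i, t i • Uᵀ *ᵥ r i = 0 := by
    simp only [r, mulVec_sub, mulVec_mulVec, hUU, one_mulVec, smul_sub, Finset.sum_sub_distrib,
      hμ₀, Finset.sum_smul, sub_self]
  have hcross : ∑ i, t i * (δ ⬝ᵥ A *ᵥ (Uᵀ *ᵥ r i) + (Uᵀ *ᵥ r i) ⬝ᵥ A *ᵥ δ) =
      δ ⬝ᵥ A *ᵥ (∑ i, t i • Uᵀ *ᵥ r i) + (∑ i, t i • Uᵀ *ᵥ r i) ⬝ᵥ A *ᵥ δ := by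
    simp only [mulVec_sum, dotProduct_sum, sum_dotProduct, mulVec_smul, dotProduct_smul,
      smul_dotProduct, smul_eq_mul, mul_add, Finset.sum_add_distrib]
  calc ∑ i, t i * ((y i - U *ᵥ μ) ⬝ᵥ S *ᵥ (y i - U *ᵥ μ))
      = ∑ i, t i * (r i ⬝ᵥ S *ᵥ r i)
          - ∑ i, t i * (δ ⬝ᵥ A *ᵥ (Uᵀ *ᵥ r i) + (Uᵀ *ᵥ r i) ⬝ᵥ A *ᵥ δ)
          + (∑ i, t i) * (δ ⬝ᵥ A *ᵥ δ) := by
        simp only [hy, dotProduct_mulVec_sub_mulVec hSU hUS hUU, mul_add, mul_sub,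
          Finset.sum_add_distrib, Finset.sum_sub_distrib, Finset.sum_mul]
    _ = ∑ i, t i * (r i ⬝ᵥ S *ᵥ r i) + (∑ i, t i) * (δ ⬝ᵥ A *ᵥ δ) := by
        rw [hcross, hr, mulVec_zero, dotProduct_zero, zero_dotProduct, add_zero, sub_zero]

end Expansion

namespace PosDef

variable {R n : Type*} [Fintype n] [Ring R] [PartialOrder R] [StarRing R] [TrivialStar R]
  {A : Matrix n n R}

theorem dotProduct_mulVec_self_nonneg (hA : A.PosDef) (x : n → R) : 0 ≤ x ⬝ᵥ A *ᵥ x := by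
  simpa using hA.posSemidef.dotProduct_mulVec_nonneg x

theorem eq_zero_of_dotProduct_mulVec_self_eq_zero (hA : A.PosDef) {x : n → R}
    (hx : x ⬝ᵥ A *ᵥ x = 0) : x = 0 := by
  by_contra hne
  simpa [hx] using hA.dotProduct_mulVec_pos hne

end PosDef

end Matrix

theorem stmt_10_general (p d n : ℕ)
    (y : Fin n → Fin p → ℝ) (t : Fin n → ℝ)
    (nk : ℝ) (hnk : nk = ∑ i, t i) (hpos : 0 < nk)
    (U : Matrix (Fin p) (Fin d) ℝ) (V : Matrix (Fin p) (Fin (p - d)) ℝ)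
    (hW1 : (Matrix.fromCols U V)ᵀ * Matrix.fromCols U V = 1)
    (Sig : Matrix (Fin d) (Fin d) ℝ) (hSig : Sig.PosDef)
    (β : ℝ)
    (Sinv : Matrix (Fin p) (Fin p) ℝ)
    (hSinv : Sinv = U * Sig⁻¹ * Uᵀ + (1 / β) • (V * Vᵀ))
    (μhat : Fin d → ℝ) (hμhat : μhat = nk⁻¹ • ∑ i, t i • Uᵀ.mulVec (y i)) :
    ∀ μ : Fin d → ℝ,
      ((∑ i, t i * ((y i - U.mulVec μhat) ⬝ᵥ Sinv.mulVec (y i - U.mulVec μhat)))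
          ≤ ∑ i, t i * ((y i - U.mulVec μ) ⬝ᵥ Sinv.mulVec (y i - U.mulVec μ))) ∧
      ((∑ i, t i * ((y i - U.mulVec μ) ⬝ᵥ Sinv.mulVec (y i - U.mulVec μ)))
          = (∑ i, t i * ((y i - U.mulVec μhat) ⬝ᵥ Sinv.mulVec (y i - U.mulVec μhat)))
        → μ = μhat) := by
  have hUU := transpose_mul_self_eq_one_of_fromCols hW1
  have hUV := transpose_mul_eq_zero_of_fromCols hW1
  have hSU : Sinv * U = U * Sig⁻¹ := hSinv ▸ mul_add_smul_mul_transpose_mul _ _ hUU hUV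
  have hUS : Uᵀ * Sinv = Sig⁻¹ * Uᵀ :=
    hSinv ▸ transpose_mul_mul_add_smul_mul_transpose _ _ hUU hUV
  have hμhat_sum : ∑ i, t i • Uᵀ *ᵥ y i = (∑ i, t i) • μhat := by
    rw [hμhat, ← hnk, smul_smul, mul_inv_cancel₀ hpos.ne', one_smul]
  intro μ
  have hsplit := sum_mul_dotProduct_mulVec_sub_mulVec hSU hUS hUU t y hμhat_sum μ
  rw [← hnk] at hsplit
  have hq := hSig.inv.dotProduct_mulVec_self_nonneg (μ - μhat)
  refine ⟨hsplit ▸ le_add_of_nonneg_right (mul_nonneg hpos.le hq), fun heq => ?_⟩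
  have hq0 : (μ - μhat) ⬝ᵥ Sig⁻¹ *ᵥ (μ - μhat) = 0 := by
    rw [hsplit, add_eq_left] at heq
    exact (mul_eq_zero.mp heq).resolve_left hpos.ne'
  exact sub_eq_zero.mp (hSig.inv.eq_zero_of_dotProduct_mulVec_self_eq_zero hq0)

/-- M step for the latent means (proof of Proposition 3): the weighted quadratic
functional `μ ↦ ∑ i, t i * (y i - Uμ)ᵗ S⁻¹ (y i - Uμ)`, with
`S⁻¹ = U Sig⁻¹ Uᵗ + (1/β) V Vᵗ`, attains its unique minimum at
`μ̂ = (1/n_k) ∑ i, t i • Uᵗ y i`. -/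
theorem stmt_10 (p d n : ℕ) (hd : d ≤ p)
    (y : Fin n → Fin p → ℝ) (t : Fin n → ℝ) (ht : ∀ i, 0 ≤ t i)
    (nk : ℝ) (hnk : nk = ∑ i, t i) (hpos : 0 < nk)
    (U : Matrix (Fin p) (Fin d) ℝ) (V : Matrix (Fin p) (Fin (p - d)) ℝ)
    (hW1 : (Matrix.fromCols U V)ᵀ * Matrix.fromCols U V = 1)
    (hW2 : Matrix.fromCols U V * (Matrix.fromCols U V)ᵀ = 1)
    (Sig : Matrix (Fin d) (Fin d) ℝ) (hSig : Sig.PosDef)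
    (β : ℝ) (hβ : 0 < β)
    (Sinv : Matrix (Fin p) (Fin p) ℝ)
    (hSinv : Sinv = U * Sig⁻¹ * Uᵀ + (1 / β) • (V * Vᵀ))
    (μhat : Fin d → ℝ) (hμhat : μhat = nk⁻¹ • ∑ i, t i • Uᵀ.mulVec (y i)) :
    ∀ μ : Fin d → ℝ,
      ((∑ i, t i * ((y i - U.mulVec μhat) ⬝ᵥ Sinv.mulVec (y i - U.mulVec μhat)))
          ≤ ∑ i, t i * ((y i - U.mulVec μ) ⬝ᵥ Sinv.mulVec (y i - U.mulVec μ))) ∧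
      ((∑ i, t i * ((y i - U.mulVec μ) ⬝ᵥ Sinv.mulVec (y i - U.mulVec μ)))
          = (∑ i, t i * ((y i - U.mulVec μhat) ⬝ᵥ Sinv.mulVec (y i - U.mulVec μhat)))
        → μ = μhat) :=
  stmt_10_general p d n y t nk hnk hpos U V hW1 Sig hSig β Sinv hSinv μhat hμhat
end
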